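/- The source map s : G_T → X_T is an open map with respect to the logical topologies, and consequently the target map t : G_T → X_T is open as well; thus the topological groupoid G_T ⇉ X_T of T-models and isomorphisms is an open topological groupoid. -/

import Mathlib

open FirstOrder FirstOrder.Language Set Topology

universe u v w x

variable {L : FirstOrder.Language.{u, v}} {α : Type w}

/-- A model of `T` whose carrier is a subset of `α`: an element of the set `X_T` of
small models of `T`. -/
structure SmallModel (L : FirstOrder.Language.{u, v}) (α : Type w) (T : L.Theory) where
  carrier : Set α
  struc : L.Structure carrier
  models : @FirstOrder.Language.Theory.Model L carrier struc T

/-- `M.Sat φ v` means that the formula `φ` is realized in the small model `M`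
at the valuation `v`. -/
def SmallModel.Sat {T : L.Theory} (M : SmallModel L α T) {ι : Type*}
    (φ : L.Formula ι) (v : ι → M.carrier) : Prop :=
  letI := M.struc
  φ.Realize v

/-- The basic open set `⟨φ, b⟩ ⊆ X_T`. -/
def XBasic {T : L.Theory} {n : ℕ} (φ : L.Formula (Fin n)) (b : Fin n → α) :
    Set (SmallModel L α T) :=
  {M | ∃ h : ∀ i, b i ∈ M.carrier, M.Sat φ fun i => ⟨b i, h i⟩}

/-- The logical topology on `X_T`, generated by the sets `⟨φ, b⟩`. -/
instance SmallModel.instTopologicalSpace {T : L.Theory} :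
    TopologicalSpace (SmallModel L α T) :=
  TopologicalSpace.generateFrom
    {U | ∃ (n : ℕ) (φ : L.Formula (Fin n)) (b : Fin n → α), U = XBasic φ b}

/-- Isomorphisms of `L`-structures between two small models. -/
abbrev StrEquiv {T : L.Theory} (A B : SmallModel L α T) : Type _ :=
  @FirstOrder.Language.Equiv L A.carrier B.carrier A.struc B.struc

/-- The underlying function of an isomorphism of small models. -/
def StrEquiv.fn {T : L.Theory} {A B : SmallModel L α T} (f : StrEquiv A B) :
    A.carrier → B.carrier :=
  (@FirstOrder.Language.Equiv.toEquiv L A.carrier B.carrier A.struc B.struc f)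

/-- Composition of isomorphisms of small models. -/
def StrEquiv.comp {T : L.Theory} {A B C : SmallModel L α T}
    (g : StrEquiv B C) (f : StrEquiv A B) : StrEquiv A C :=
  letI := A.struc; letI := B.struc; letI := C.struc
  FirstOrder.Language.Equiv.comp g f

/-- An element of `G_T`: a triple `(M, N, f)` with `M, N ∈ X_T` and `f : M ≅ N` an
isomorphism of `L`-structures. -/
structure ModelIso (L : FirstOrder.Language.{u, v}) (α : Type w) (T : L.Theory) where
  src : SmallModel L α T
  tgt : SmallModel L α T
  iso : StrEquiv src tgt

/-- The basic open set `⟨a ↦ b⟩ ⊆ G_T`. -/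
def GMapsTo {T : L.Theory} (a b : α) : Set (ModelIso L α T) :=
  {g | ∃ h : a ∈ g.src.carrier, (StrEquiv.fn g.iso ⟨a, h⟩ : α) = b}

/-- The logical topology on `G_T`, generated by the sets `s⁻¹⟨φ, b⟩`, `t⁻¹⟨φ, b⟩` and
`⟨a ↦ b⟩`. -/
instance ModelIso.instTopologicalSpace {T : L.Theory} :
    TopologicalSpace (ModelIso L α T) :=
  TopologicalSpace.generateFrom
    ({U | ∃ (n : ℕ) (φ : L.Formula (Fin n)) (b : Fin n → α),
        U = ModelIso.src ⁻¹' XBasic φ b} ∪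
     {U | ∃ (n : ℕ) (φ : L.Formula (Fin n)) (b : Fin n → α),
        U = ModelIso.tgt ⁻¹' XBasic φ b} ∪
     {U | ∃ a b : α, U = GMapsTo (T := T) a b})

/-- The identity arrow of `G_T` at a model `M`. -/
def ModelIso.idIso {T : L.Theory} (M : SmallModel L α T) : ModelIso L α T :=
  ⟨M, M, letI := M.struc; FirstOrder.Language.Equiv.refl L M.carrier⟩

/-- The inverse of an arrow of `G_T`. -/
def ModelIso.invIso {T : L.Theory} (g : ModelIso L α T) : ModelIso L α T :=
  ⟨g.tgt, g.src, letI := g.src.struc; letI := g.tgt.struc;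
    FirstOrder.Language.Equiv.symm g.iso⟩

/-!
A basic neighbourhood of an arrow `g : M ≅ N` of `G_T` constrains only finitely many values
of `g` and finitely many formulas true at `M` or at `N`; those true at `N` pull back along `g`
to formulas true at `M`. So if `M'` is close to `M` and `σ` is a permutation of `α` agreeing
with `g` at finitely many prescribed points (one exists since `g` is injective), renaming `M'`
along `σ` gives an arrow with source `M'` in that neighbourhood. Hence `s` maps neighbourhoods
of `g` onto neighbourhoods of `M`. The target map is `s` composed with inversion, which is a
homeomorphism of `G_T`.
-/

open Filter Function Equiv

section AgreeingPerms

variable {ι β : Type*}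

def agreeingPerms (e f : ι → β) : Filter (Perm β) :=
  ⨅ P : Finset ι, 𝓟 {σ | ∀ x ∈ P, σ (e x) = f x}

lemma eventually_agreeingPerms_apply (e f : ι → β) (x : ι) :
    ∀ᶠ σ in agreeingPerms e f, σ (e x) = f x :=
  mem_iInf_of_mem {x} (by simp)

lemma agreeingPerms_neBot {e f : ι → β} (he : Injective e) (hf : Injective f) :
    (agreeingPerms e f).NeBot := by
  refine iInf_neBot_of_directed' ?_ fun P => principal_neBot_iff.2 ?_
  · classical
    exact fun P Q => ⟨P ∪ Q, principal_mono.2 fun σ hσ x hx => hσ x (Finset.mem_union_left Q hx),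
      principal_mono.2 fun σ hσ x hx => hσ x (Finset.mem_union_right P hx)⟩
  · obtain ⟨σ, hσ⟩ := Perm.exists_extending_pair (fun x : P => e x) (fun x : P => f x)
      (he.comp Subtype.val_injective) (hf.comp Subtype.val_injective)
    exact ⟨σ, fun x hx => hσ ⟨x, hx⟩⟩

end AgreeingPerms

section LogicalTopology

variable {T : L.Theory}

lemma isOpen_XBasic {n : ℕ} (φ : L.Formula (Fin n)) (b : Fin n → α) :
    IsOpen (XBasic (T := T) φ b) :=
  TopologicalSpace.isOpen_generateFrom_of_mem ⟨n, φ, b, rfl⟩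

lemma isOpen_setOf_mem_carrier (a : α) : IsOpen {M : SmallModel L α T | a ∈ M.carrier} := by
  have : {M : SmallModel L α T | a ∈ M.carrier} = XBasic (⊤ : L.Formula (Fin 1)) fun _ => a := by
    ext M
    let := M.struc
    exact ⟨fun h => ⟨fun _ => h, Formula.realize_top.2 trivial⟩, fun ⟨h, _⟩ => h 0⟩
  rw [this]
  exact isOpen_XBasic _ _

lemma StrEquiv.fn_injective {A B : SmallModel L α T} (f : StrEquiv A B) :
    Injective (StrEquiv.fn f) :=
  Equiv.injective _

lemma StrEquiv.fn_surjective {A B : SmallModel L α T} (f : StrEquiv A B) :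
    Surjective (StrEquiv.fn f) :=
  Equiv.surjective _

lemma StrEquiv.sat_iff {A B : SmallModel L α T} (f : StrEquiv A B) {ι : Type*}
    (φ : L.Formula ι) (v : ι → A.carrier) :
    B.Sat φ (fun i => StrEquiv.fn f (v i)) ↔ A.Sat φ v := by
  let := A.struc; let := B.struc
  exact StrongHomClass.realize_formula f φ

lemma ModelIso.tgt_mem_XBasic_iff (g : ModelIso L α T) {n : ℕ} (φ : L.Formula (Fin n))
    (b : Fin n → g.src.carrier) :
    g.tgt ∈ XBasic φ (fun i => (StrEquiv.fn g.iso (b i) : α)) ↔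
      g.src ∈ XBasic φ (fun i => (b i : α)) :=
  ⟨fun ⟨_, h⟩ => ⟨fun i => (b i).2, (StrEquiv.sat_iff g.iso φ b).1 h⟩,
    fun ⟨_, h⟩ => ⟨fun i => (StrEquiv.fn g.iso (b i)).2, (StrEquiv.sat_iff g.iso φ b).2 h⟩⟩

noncomputable def rename (M : SmallModel L α T) (σ : Perm α) : ModelIso L α T :=
  letI := M.struc
  haveI : M.carrier ⊨ T := M.models
  let e := σ.image M.carrier
  letI := e.inducedStructure (L := L)
  { src := M
    tgt := ⟨σ '' M.carrier, _, StrongHomClass.theory_model e.inducedStructureEquiv⟩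
    iso := e.inducedStructureEquiv }

def ModelIso.approxPerms (g : ModelIso L α T) : Filter (Perm α) :=
  agreeingPerms Subtype.val fun x => (StrEquiv.fn g.iso x : α)

instance ModelIso.approxPerms_neBot (g : ModelIso L α T) : g.approxPerms.NeBot :=
  agreeingPerms_neBot Subtype.val_injective (Subtype.val_injective.comp g.iso.fn_injective)

lemma ModelIso.eventually_approxPerms_apply (g : ModelIso L α T) (x : g.src.carrier) :
    ∀ᶠ σ in g.approxPerms, σ x = (StrEquiv.fn g.iso x : α) :=
  eventually_agreeingPerms_apply _ _ x

lemma eventually_rename_tgt_mem_XBasic (g : ModelIso L α T) {n : ℕ} (ψ : L.Formula (Fin n))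
    (c : Fin n → α) (hg : g.tgt ∈ XBasic ψ c) :
    ∀ᶠ p in 𝓝 g.src ×ˢ g.approxPerms, (rename p.1 p.2).tgt ∈ XBasic ψ c := by
  choose d hd using fun j => g.iso.fn_surjective ⟨c j, hg.1 j⟩
  have hc : c = fun j => (StrEquiv.fn g.iso (d j) : α) := funext fun j => by rw [hd]
  rw [hc, g.tgt_mem_XBasic_iff] at hg
  filter_upwards [((isOpen_XBasic ψ _).eventually_mem hg).prod_inl _,
    (eventually_all.2 fun j => g.eventually_approxPerms_apply (d j)).prod_inr _]
    with ⟨M, σ⟩ hM hσ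
  have hcσ : c = fun j => σ (d j) := by
    rw [hc]
    exact funext fun j => (hσ j).symm
  rw [hcσ]
  exact ((rename M σ).tgt_mem_XBasic_iff ψ fun j => ⟨d j, hM.1 j⟩).2 hM

lemma eventually_rename_mem_GMapsTo (g : ModelIso L α T) {a b : α} (hg : g ∈ GMapsTo a b) :
    ∀ᶠ p in 𝓝 g.src ×ˢ g.approxPerms, rename p.1 p.2 ∈ GMapsTo a b := by
  obtain ⟨ha, rfl⟩ := hg
  filter_upwards [((isOpen_setOf_mem_carrier a).eventually_mem ha).prod_inl _,
    (g.eventually_approxPerms_apply ⟨a, ha⟩).prod_inr _] with p hp hσ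
  exact ⟨hp, hσ⟩

lemma tendsto_rename (g : ModelIso L α T) :
    Tendsto (fun p : SmallModel L α T × Perm α => rename p.1 p.2)
      (𝓝 g.src ×ˢ g.approxPerms) (𝓝 g) := by
  refine TopologicalSpace.tendsto_nhds_generateFrom_iff.2 ?_
  rintro _ ((⟨n, φ, b, rfl⟩ | ⟨n, ψ, c, rfl⟩) | ⟨a, b, rfl⟩) hg
  · exact ((isOpen_XBasic φ b).eventually_mem hg).prod_inl _
  · exact eventually_rename_tgt_mem_XBasic g ψ c hg
  · exact eventually_rename_mem_GMapsTo g hg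

lemma ModelIso.nhds_src_le_map_nhds (g : ModelIso L α T) :
    𝓝 g.src ≤ map ModelIso.src (𝓝 g) :=
  calc 𝓝 g.src = map Prod.fst (𝓝 g.src ×ˢ g.approxPerms) := (map_fst_prod _ _).symm
    _ = map ModelIso.src (map (fun p => rename p.1 p.2) (𝓝 g.src ×ˢ g.approxPerms)) := by
      rw [map_map]; rfl
    _ ≤ map ModelIso.src (𝓝 g) := map_mono (tendsto_rename g)

lemma ModelIso.invIso_involutive : Involutive (ModelIso.invIso : ModelIso L α T → _) := by
  rintro ⟨M, N, f⟩
  let := M.struc; let := N.struc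
  exact congrArg (ModelIso.mk M N) (FirstOrder.Language.Equiv.symm_symm f)

lemma ModelIso.invIso_preimage_GMapsTo (a b : α) :
    (ModelIso.invIso ⁻¹' GMapsTo a b : Set (ModelIso L α T)) = GMapsTo b a := by
  ext g
  let := g.src.struc; let := g.tgt.struc
  constructor
  · rintro ⟨h, rfl⟩
    exact ⟨(g.iso.toEquiv.symm ⟨a, h⟩).2, congrArg Subtype.val (g.iso.toEquiv.apply_symm_apply _)⟩
  · rintro ⟨h, rfl⟩
    exact ⟨(g.iso.toEquiv ⟨b, h⟩).2, congrArg Subtype.val (g.iso.toEquiv.symm_apply_apply _)⟩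

lemma ModelIso.continuous_invIso : Continuous (ModelIso.invIso : ModelIso L α T → _) := by
  refine continuous_generateFrom_iff.2 ?_
  rintro _ ((⟨n, φ, b, rfl⟩ | ⟨n, φ, b, rfl⟩) | ⟨a, b, rfl⟩)
  · exact TopologicalSpace.isOpen_generateFrom_of_mem (Or.inl (Or.inr ⟨n, φ, b, rfl⟩))
  · exact TopologicalSpace.isOpen_generateFrom_of_mem (Or.inl (Or.inl ⟨n, φ, b, rfl⟩))
  · rw [ModelIso.invIso_preimage_GMapsTo]
    exact TopologicalSpace.isOpen_generateFrom_of_mem (Or.inr ⟨b, a, rfl⟩)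

lemma ModelIso.isOpenMap_invIso : IsOpenMap (ModelIso.invIso : ModelIso L α T → _) := by
  intro U hU
  rw [ModelIso.invIso_involutive.image_eq_preimage_symm]
  exact hU.preimage ModelIso.continuous_invIso

lemma ModelIso.isOpenMap_src : IsOpenMap (ModelIso.src : ModelIso L α T → SmallModel L α T) :=
  IsOpenMap.of_nhds_le ModelIso.nhds_src_le_map_nhds

end LogicalTopology

/-- **`G_T ⇉ X_T` is an open topological groupoid**: the source map (and consequently the
target map) is open with respect to the logical topologies. -/
theorem source_target_open {T : L.Theory} :
    IsOpenMap (ModelIso.src : ModelIso L α T → SmallModel L α T) ∧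
      IsOpenMap (ModelIso.tgt : ModelIso L α T → SmallModel L α T) :=
  ⟨ModelIso.isOpenMap_src, ModelIso.isOpenMap_src.comp ModelIso.isOpenMap_invIso⟩
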